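/- arXiv:2207.01041 — 7 statements merged into one kernel-verified Lean document; each statement's English description precedes it below -/
import Mathlib

section
/- For every integer t ≥ 1 there exists a constant c > 0 (depending only on t) such that for all n ≥ t + 1, the interval hypergraph H_n satisfies χ^t_CF(H_n) ≥ c · log₂ n. (Note that H_n has the Hereditary Linear Delaunay property with parameter 1, so this shows the O(c t² log n) upper bound is tight in n up to constant factors.) -/
/-- A `t`-subset-CF-colouring: every hyperedge `h` with `|h| > t` contains a `t`-element
subset whose colour differs from the colour of every other `t`-element subset of `h`. -/
def IsSubsetCFColouring {α β : Type*} (t : ℕ) (E : Set (Finset α)) (φ : Finset α → β) : Prop :=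
  ∀ h ∈ E, t < h.card → ∃ S : Finset α, S ⊆ h ∧ S.card = t ∧
    ∀ S' : Finset α, S' ⊆ h → S'.card = t → S' ≠ S → φ S' ≠ φ S

/-- The hyperedges of the interval hypergraph `H_n`: all discrete intervals
`{i, i+1, …, j}` with `1 ≤ i ≤ j ≤ n`. -/
def intervalEdges (n : ℕ) : Set (Finset ℕ) :=
  {e | ∃ i j : ℕ, 1 ≤ i ∧ i ≤ j ∧ j ≤ n ∧ e = Finset.Icc i j}

/-!
In an interval of length at least `(t + 2) ^ (m + 1) - 1`, the uniquely coloured `t`-subset `S`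
has only `t` points, so it misses a subinterval of length `(t + 2) ^ m - 1`; every `t`-subset of
that subinterval differs from `S` and hence has a colour other than that of `S`. Iterating, the
`t`-subsets of `{1, …, n}` use at least `log_{t+2} n` colours.
-/

open Finset

lemma Ico_mem_intervalEdges {n a b : ℕ} (ha : 1 ≤ a) (hab : a < b) (hb : b ≤ n + 1) :
    Ico a b ∈ intervalEdges n :=
  ⟨a, b - 1, ha, by omega, by omega, by ext; simp only [mem_Ico, mem_Icc]; omega⟩

lemma exists_Ico_disjoint (S : Finset ℕ) (L : ℕ) :
    ∀ a b, a + #S * (L + 1) + L ≤ b → ∃ x, a ≤ x ∧ x + L ≤ b ∧ Disjoint (Ico x (x + L)) S := by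
  induction S using Finset.induction_on_max with
  | empty => exact fun a b h ↦ ⟨a, le_rfl, by simpa using h, disjoint_empty_right _⟩
  | insert s S hlt ih =>
    intro a b h
    have hs : s ∉ S := fun hs ↦ (hlt s hs).false
    rw [card_insert_of_notMem hs] at h
    by_cases hright : max a (s + 1) + L ≤ b
    · refine ⟨max a (s + 1), le_max_left _ _, hright, disjoint_insert_right.2 ⟨?_, ?_⟩⟩
      · simp only [mem_Ico, not_and, not_lt]; omega
      · refine disjoint_left.2 fun y hy hyS ↦ ?_
        have := hlt y hyS
        simp only [mem_Ico] at hy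
        omega
    · obtain ⟨x, hax, hxb, hdisj⟩ := ih a (min s b) (by rw [add_mul] at h; omega)
      refine ⟨x, hax, by omega, disjoint_insert_right.2 ⟨?_, hdisj⟩⟩
      simp only [mem_Ico, not_and, not_lt]; omega

lemma le_card_image_powersetCard_Ico {β : Type*} [DecidableEq β] {t n : ℕ} (ht : 1 ≤ t)
    {φ : Finset ℕ → β} (hφ : IsSubsetCFColouring t (intervalEdges n) φ) (m : ℕ) :
    ∀ a b, 1 ≤ a → b ≤ n + 1 → a + (t + 2) ^ m ≤ b + 1 →
      m ≤ #(((Ico a b).powersetCard t).image φ) := by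
  induction m with
  | zero => simp
  | succ m ih =>
    intro a b ha hb hlen
    obtain ⟨L, hL⟩ : ∃ L, (t + 2) ^ m = L + 1 := Nat.exists_eq_add_one.2 (by positivity)
    rw [pow_succ, hL] at hlen
    have hlong : a + t + 1 ≤ b := by nlinarith
    obtain ⟨S, hSsub, hScard, hSuniq⟩ :=
      hφ _ (Ico_mem_intervalEdges ha (by omega) hb) (by rw [Nat.card_Ico]; omega)
    obtain ⟨x, hax, hxb, hgap⟩ := exists_Ico_disjoint S L a b (by rw [hScard]; nlinarith)
    have hgap_sub : Ico x (x + L) ⊆ Ico a b := Ico_subset_Ico hax hxb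
    have hfresh : φ S ∉ ((Ico x (x + L)).powersetCard t).image φ := by
      simp only [mem_image, mem_powersetCard, not_exists, not_and, and_imp]
      refine fun S' hS'sub hS'card ↦ hSuniq S' (hS'sub.trans hgap_sub) hS'card ?_
      rintro rfl
      obtain ⟨y, hy⟩ := card_pos.1 (hScard ▸ ht)
      exact disjoint_left.1 hgap (hS'sub hy) hy
    calc m + 1 ≤ #(((Ico x (x + L)).powersetCard t).image φ) + 1 :=
          Nat.succ_le_succ (ih x (x + L) (ha.trans hax) (by omega) (by omega))
      _ = #(insert (φ S) (((Ico x (x + L)).powersetCard t).image φ)) :=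
          (card_insert_of_notMem hfresh).symm
      _ ≤ #(((Ico a b).powersetCard t).image φ) := by
          refine card_le_card (insert_subset ?_ (image_subset_image ?_))
          · exact mem_image_of_mem φ (mem_powersetCard.2 ⟨hSsub, hScard⟩)
          · exact powersetCard_mono hgap_sub

lemma Real.logb_natCast_le_succ_log_mul {c : ℝ} (hc : 1 < c) {b : ℕ} (hb : 1 < b) (n : ℕ) :
    logb c n ≤ (Nat.log b n + 1) * logb c b := by
  rcases n.eq_zero_or_pos with rfl | hn
  · simp only [Nat.cast_zero, logb_zero]
    exact mul_nonneg (by positivity) (logb_nonneg hc (by exact_mod_cast hb.le))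
  have hlt : (n : ℝ) < (b : ℝ) ^ (Nat.log b n + 1) := by
    exact_mod_cast Nat.lt_pow_succ_log_self hb n
  calc logb c n ≤ logb c ((b : ℝ) ^ (Nat.log b n + 1)) :=
        logb_le_logb_of_le hc (by exact_mod_cast hn) hlt.le
    _ = (Nat.log b n + 1) * logb c b := by rw [logb_pow]; push_cast; ring

theorem stmt_1 :
    ∀ t : ℕ, 1 ≤ t →
      ∃ c : ℝ, 0 < c ∧
        ∀ n : ℕ, t + 1 ≤ n →
          ∀ (k : ℕ) (φ : Finset ℕ → Fin k),
            IsSubsetCFColouring t (intervalEdges n) φ →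
            c * Real.logb 2 n ≤ (k : ℝ) := by
  intro t ht
  have hB : 0 < Real.logb 2 (t + 2) :=
    Real.logb_pos (by norm_num) (by linarith [t.cast_nonneg (α := ℝ)])
  refine ⟨1 / (2 * Real.logb 2 (t + 2)), by positivity, fun n hn k φ hφ ↦ ?_⟩
  have hk : 1 ≤ k := (φ ∅).pos
  have hlog : Nat.log (t + 2) n ≤ k := by
    refine (le_card_image_powersetCard_Ico ht hφ _ 1 (n + 1) le_rfl le_rfl ?_).trans ?_
    · have := Nat.pow_log_le_self (t + 2) (show n ≠ 0 by omega); omega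
    · simpa using card_le_univ (((Ico 1 (n + 1)).powersetCard t).image φ)
  have hbound := Real.logb_natCast_le_succ_log_mul one_lt_two (show 1 < t + 2 by omega) n
  push_cast at hbound
  have hsucc : (Nat.log (t + 2) n : ℝ) + 1 ≤ 2 * k := by exact_mod_cast (by omega : _ + 1 ≤ 2 * k)
  rw [one_div_mul_eq_div, div_le_iff₀ (by positivity)]
  nlinarith
end

section
/- For every integer t ≥ 2 and every k ∈ ℕ there exists n ∈ ℕ with n ≥ t such that the hypergraph H_n with vertex set V = {1, 2, …, n} and hyperedge set { {1} ∪ s : s a (t+1)-element subset of {2, 3, …, n} } satisfies χ_CF(H_n) = 2 and χ^t_CF(H_n) > k. Consequently, there is no function f such that χ^t_CF(H) ≤ f(χ_CF(H)) for all hypergraphs H. -/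
/-- A conflict-free colouring of the vertices: every nonempty hyperedge contains a vertex
whose colour differs from the colours of all other vertices of the hyperedge. -/
def IsCFColouring {α β : Type*} (E : Set (Finset α)) (φ : α → β) : Prop :=
  ∀ h ∈ E, h.Nonempty → ∃ x ∈ h, ∀ y ∈ h, y ≠ x → φ y ≠ φ x

/-- The hyperedges of the hypergraph `H_n`: all sets `{1} ∪ s` where `s` is a
`(t+1)`-element subset of `{2, 3, …, n}`. -/
def starEdges (t n : ℕ) : Set (Finset ℕ) :=
  {e | ∃ s : Finset ℕ, s ⊆ Finset.Icc 2 n ∧ s.card = t + 1 ∧ e = insert 1 s}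

/-!
Marking the centre `1` with its own colour is a CF-colouring with two colours. Given any
colouring `φ` of the `t`-sets with `k` colours, Ramsey's theorem applied twice gives
`A ⊆ {2, …, n}` with `|A| = t + 1` such that `φ` is constant on the `t`-subsets of `A` and
`r ↦ φ ({1} ∪ r)` is constant on its `(t - 1)`-subsets. In the hyperedge `{1} ∪ A` every
`t`-subset then shares its colour with another one: a `t`-subset of `A` with any other, and
`{1} ∪ r` with `{1} ∪ r'` for another `(t - 1)`-subset `r'` of `A`, which exists as
`0 < t - 1 < t + 1`.
-/

open Finset

namespace Finset

variable {α β : Type*}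

def IsHomogeneous (φ : Finset α → β) (r : ℕ) (A : Finset α) : Prop :=
  ∃ c, ∀ S ⊆ A, #S = r → φ S = c

theorem IsHomogeneous.mono {φ : Finset α → β} {r : ℕ} {A B : Finset α}
    (hB : IsHomogeneous φ r B) (hAB : A ⊆ B) : IsHomogeneous φ r A :=
  let ⟨c, hc⟩ := hB
  ⟨c, fun S hS => hc S (hS.trans hAB)⟩

theorem IsHomogeneous.eq {φ : Finset α → β} {r : ℕ} {A S S' : Finset α}
    (hA : IsHomogeneous φ r A) (hS : S ⊆ A) (hS' : S' ⊆ A) (hSr : #S = r) (hS'r : #S' = r) :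
    φ S = φ S' :=
  let ⟨_, hc⟩ := hA
  (hc S hS hSr).trans (hc S' hS' hS'r).symm

theorem exists_subset_card_eq_ne [DecidableEq α] {S s : Finset α} (hS : S ⊆ s) (h0 : 0 < #S)
    (hlt : #S < #s) : ∃ S' ⊆ s, #S' = #S ∧ S' ≠ S := by
  obtain ⟨a, has, haS⟩ := not_subset.mp fun h => (card_le_card h).not_gt hlt
  obtain ⟨b, hb⟩ := card_pos.mp h0
  have haS' : a ∉ S.erase b := fun h => haS (mem_of_mem_erase h)
  refine ⟨insert a (S.erase b), insert_subset has ((erase_subset b S).trans hS), ?_,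
    fun h => haS (h ▸ mem_insert_self a _)⟩
  rw [card_insert_of_notMem haS', card_erase_of_mem hb]
  omega

section Ramsey

variable [LinearOrder α]

def IsEndHomogeneous (φ : Finset α → β) (r : ℕ) (A : Finset α) (c : α → β) : Prop :=
  ∀ x ∈ A, ∀ T ⊆ A, (∀ y ∈ T, x < y) → #T = r → φ (insert x T) = c x

theorem exists_isEndHomogeneous {r : ℕ}
    (ramsey : ∀ m, ∃ n, ∀ (φ : Finset α → β) (V : Finset α), n ≤ #V →
      ∃ A ⊆ V, #A = m ∧ IsHomogeneous φ r A) (m : ℕ) :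
    ∃ n, ∀ (φ : Finset α → β) (V : Finset α), n ≤ #V →
      ∃ A ⊆ V, #A = m ∧ ∃ c, IsEndHomogeneous φ r A c := by
  induction m with
  | zero =>
    exact ⟨0, fun φ V _ =>
      ⟨∅, empty_subset V, rfl, fun _ => φ ∅, fun x hx => absurd hx (notMem_empty x)⟩⟩
  | succ m ih =>
    obtain ⟨nA, hnA⟩ := ih
    obtain ⟨nW, hnW⟩ := ramsey nA
    refine ⟨nW + 1, fun φ V hV => ?_⟩
    have hVne : V.Nonempty := card_pos.mp (by omega)
    -- Split off the minimum `v` of `V` and make the rest homogeneous for `T ↦ φ (insert v T)`.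
    set v := V.min' hVne
    obtain ⟨W, hWV, hWcard, cv, hW⟩ := hnW (fun T => φ (insert v T)) (V.erase v)
      (by rw [card_erase_of_mem (V.min'_mem hVne)]; omega)
    obtain ⟨A, hAW, hAcard, c, hA⟩ := hnA φ W hWcard.ge
    have hv_lt : ∀ x ∈ A, v < x := fun x hx =>
      V.min'_lt_of_mem_erase_min' hVne (hWV (hAW hx))
    have hvA : v ∉ A := fun h => (hv_lt v h).false
    refine ⟨insert v A,
      insert_subset (V.min'_mem hVne) ((hAW.trans hWV).trans (erase_subset _ _)),
      by rw [card_insert_of_notMem hvA, hAcard], Function.update c v cv, ?_⟩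
    intro x hx T hT hxT hTr
    have hvx : v ≤ x := (mem_insert.mp hx).elim ge_of_eq fun h => (hv_lt x h).le
    have hTA : T ⊆ A := fun y hy =>
      (mem_insert.mp (hT hy)).resolve_left (hvx.trans_lt (hxT y hy)).ne'
    rcases mem_insert.mp hx with rfl | hxA
    · rw [Function.update_self]
      exact hW T (hTA.trans hAW) hTr
    · rw [Function.update_of_ne (hv_lt x hxA).ne']
      exact hA x hxA T hTA hxT hTr

theorem IsEndHomogeneous.isHomogeneous_filter [DecidableEq β] {φ : Finset α → β} {r : ℕ}
    {A : Finset α} {c : α → β} (hA : IsEndHomogeneous φ r A c) (b : β) :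
    IsHomogeneous φ (r + 1) {x ∈ A | c x = b} := by
  refine ⟨b, fun S hS hSr => ?_⟩
  have hSne : S.Nonempty := card_pos.mp (by omega)
  have hmin := mem_filter.mp (hS (S.min'_mem hSne))
  rw [← insert_erase (S.min'_mem hSne), ← hmin.2]
  refine hA _ hmin.1 _ ((erase_subset _ S).trans fun x hx => (mem_filter.mp (hS hx)).1)
    (fun y hy => S.min'_lt_of_mem_erase_min' hSne hy) ?_
  rw [card_erase_of_mem (S.min'_mem hSne), hSr, Nat.add_sub_cancel]

theorem exists_isHomogeneous [Fintype β] (r m : ℕ) :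
    ∃ n, ∀ (φ : Finset α → β) (V : Finset α), n ≤ #V →
      ∃ A ⊆ V, #A = m ∧ IsHomogeneous φ r A := by
  induction r generalizing m with
  | zero =>
    refine ⟨m, fun φ V hV => ?_⟩
    obtain ⟨A, hAV, hA⟩ := exists_subset_card_eq hV
    exact ⟨A, hAV, hA, φ ∅, fun S _ hS => by rw [card_eq_zero.mp hS]⟩
  | succ r ih =>
    classical
    obtain ⟨n, hn⟩ := exists_isEndHomogeneous ih (Fintype.card β * m)
    refine ⟨n, fun φ V hV => ?_⟩
    obtain ⟨A, hAV, hAcard, c, hA⟩ := hn φ V hV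
    obtain ⟨b, -, hb⟩ := exists_le_card_fiber_of_mul_le_card_of_maps_to (f := c) (t := univ)
      (fun a _ => mem_univ (c a)) ⟨φ ∅, mem_univ _⟩ (by rw [card_univ, hAcard])
    obtain ⟨B, hBA, hBcard⟩ := exists_subset_card_eq hb
    exact ⟨B, hBA.trans ((filter_subset _ A).trans hAV), hBcard,
      (hA.isHomogeneous_filter b).mono hBA⟩

end Ramsey

theorem IsHomogeneous.exists_ne_eq_of_subset_insert [DecidableEq α] {φ : Finset α → β} {t : ℕ}
    {c : α} {s S : Finset α} (hφ : IsHomogeneous φ t s)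
    (hφc : IsHomogeneous (fun r => φ (insert c r)) (t - 1) s) (ht : 2 ≤ t) (hts : t < #s)
    (hc : c ∉ s) (hS : S ⊆ insert c s) (hSt : #S = t) :
    ∃ S' ⊆ insert c s, #S' = t ∧ S' ≠ S ∧ φ S' = φ S := by
  by_cases hcS : c ∈ S
  · have hrs : S.erase c ⊆ s := fun y hy =>
      (mem_insert.mp (hS (mem_of_mem_erase hy))).resolve_left (ne_of_mem_erase hy)
    have hr : #(S.erase c) = t - 1 := by rw [card_erase_of_mem hcS, hSt]
    obtain ⟨r', hr's, hr'r, hne⟩ := exists_subset_card_eq_ne hrs (by omega) (by omega)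
    have hcr' : c ∉ r' := fun h => hc (hr's h)
    refine ⟨insert c r', insert_subset_insert c hr's, by rw [card_insert_of_notMem hcr']; omega,
      fun h => hne (by rw [← erase_insert hcr', h]), ?_⟩
    rw [← insert_erase hcS]
    exact hφc.eq hr's hrs (hr'r.trans hr) hr
  · have hSs : S ⊆ s := fun y hy => (mem_insert.mp (hS hy)).resolve_left fun h => hcS (h ▸ hy)
    obtain ⟨S', hS's, hS'S, hne⟩ := exists_subset_card_eq_ne hSs (by omega) (by omega)
    exact ⟨S', hS's.trans (subset_insert c s), hS'S.trans hSt, hne,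
      hφ.eq hS's hSs (hS'S.trans hSt) hSt⟩

end Finset

theorem isCFColouring_ite_of_forall_mem {α : Type*} [DecidableEq α] {E : Set (Finset α)} {a : α}
    (hE : ∀ h ∈ E, a ∈ h) : IsCFColouring E (fun x => if x = a then (0 : Fin 2) else 1) :=
  fun h hh _ => ⟨a, hE h hh, fun y _ hya => by simp [hya]⟩

theorem not_isCFColouring_of_subsingleton {α β : Type*} [Subsingleton β] {E : Set (Finset α)}
    {h : Finset α} (hh : h ∈ E) (hcard : 1 < #h) (φ : α → β) : ¬ IsCFColouring E φ := by
  intro hφ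
  obtain ⟨x, hx, hux⟩ := hφ h hh (card_pos.mp (by omega))
  obtain ⟨y, hy, hyx⟩ := exists_mem_ne hcard x
  exact hux y hy hyx (Subsingleton.elim _ _)

theorem one_notMem_of_subset_Icc {s : Finset ℕ} {n : ℕ} (hs : s ⊆ Icc 2 n) : 1 ∉ s :=
  fun h => by simpa using hs h

theorem one_mem_of_mem_starEdges {t n : ℕ} {e : Finset ℕ} (he : e ∈ starEdges t n) : 1 ∈ e := by
  obtain ⟨s, -, -, rfl⟩ := he
  exact mem_insert_self 1 s

theorem card_of_mem_starEdges {t n : ℕ} {e : Finset ℕ} (he : e ∈ starEdges t n) :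
    #e = t + 2 := by
  obtain ⟨s, hs, hst, rfl⟩ := he
  rw [card_insert_of_notMem (one_notMem_of_subset_Icc hs), hst]

theorem stmt_4 :
    ∀ t : ℕ, 2 ≤ t → ∀ k : ℕ,
      ∃ n : ℕ, t ≤ n ∧
        -- χ_CF(H_n) = 2 : a CF-colouring with 2 colours exists, none with 1 colour
        (∃ φ : ℕ → Fin 2, IsCFColouring (starEdges t n) φ) ∧
        (∀ φ : ℕ → Fin 1, ¬ IsCFColouring (starEdges t n) φ) ∧
        -- χ^t_CF(H_n) > k : no t-subset-CF-colouring with k colours exists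
        (∀ φ : Finset ℕ → Fin k, ¬ IsSubsetCFColouring t (starEdges t n) φ) := by
  intro t ht k
  obtain ⟨n₁, hn₁⟩ := exists_isHomogeneous (α := ℕ) (β := Fin k) t (t + 1)
  obtain ⟨n₀, hn₀⟩ := exists_isHomogeneous (α := ℕ) (β := Fin k) (t - 1) n₁
  have hV : #(Icc 2 (n₀ + t + 2)) = n₀ + t + 1 := by simp
  refine ⟨n₀ + t + 2, by omega,
    ⟨_, isCFColouring_ite_of_forall_mem fun e he => one_mem_of_mem_starEdges he⟩,
    fun φ => ?_, fun φ hφ => ?_⟩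
  · obtain ⟨s, hs, hst⟩ := exists_subset_card_eq (s := Icc 2 (n₀ + t + 2)) (n := t + 1) (by omega)
    have he : insert 1 s ∈ starEdges t (n₀ + t + 2) := ⟨s, hs, hst, rfl⟩
    exact not_isCFColouring_of_subsingleton he (by rw [card_of_mem_starEdges he]; omega) φ
  · obtain ⟨B, hBV, hBcard, hBφ⟩ := hn₀ (fun r => φ (insert 1 r)) (Icc 2 (n₀ + t + 2)) (by omega)
    obtain ⟨A, hAB, hAcard, hAφ⟩ := hn₁ φ B hBcard.ge
    have hA : insert 1 A ∈ starEdges t (n₀ + t + 2) := ⟨A, hAB.trans hBV, hAcard, rfl⟩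
    obtain ⟨S, hS, hSt, huniq⟩ := hφ _ hA (by rw [card_of_mem_starEdges hA]; omega)
    obtain ⟨S', hS', hS't, hne, heq⟩ := hAφ.exists_ne_eq_of_subset_insert (hBφ.mono hAB) ht
      (by omega) (one_notMem_of_subset_Icc (hAB.trans hBV)) hS hSt
    exact huniq S' hS' hS't hne heq
end

section
/- There exists an absolute constant C > 0 such that for all integers t ≥ 1 and k ≥ 1 and every hypergraph H = (V, E) with |V| = n ≥ 2, if for every subset V' ⊆ V the induced sub-hypergraph H[V'] admits a (t+1)-colourful colouring with at most k colours, then H admits a t-UM-colouring with at most C · k · log₂ n colours. -/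
/-- A `t`-UM-colouring by linearly ordered colours: in every hyperedge `h` there is a set `S`
of `min |h| t` vertices carrying the largest colours of `h`, each of which appears on exactly
one vertex of `h` (and all other vertices of `h` get strictly smaller colours). -/
def IsTUMColouring {α β : Type*} [LinearOrder β] (t : ℕ) (E : Set (Finset α))
    (φ : α → β) : Prop :=
  ∀ h ∈ E, ∃ S : Finset α, S ⊆ h ∧ S.card = min h.card t ∧
    (∀ x ∈ S, ∀ y ∈ h, φ y = φ x → y = x) ∧
    (∀ x ∈ S, ∀ y ∈ h, y ∉ S → φ y < φ x)

/-- A `t`-colourful colouring: every hyperedge `h` contains at least `min |h| t` vertices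
with pairwise distinct colours. -/
def IsColourfulColouring {α β : Type*} (t : ℕ) (E : Set (Finset α)) (φ : α → β) : Prop :=
  ∀ h ∈ E, ∃ S : Finset α, S ⊆ h ∧ S.card = min h.card t ∧ Set.InjOn φ ↑S

/-!
Colour in layers. Take a `(t+1)`-colourful `k`-colouring of the vertices not yet layered and
make its largest colour class, at least a `1/k` fraction of them, the lowest layer not yet used;
after at most `1 + k ln n` rounds every vertex is layered. In an edge `h`, let `x` have fewer
than `t` vertices of `h` in higher layers, and let `W` be the vertices still unlayered when the
layer of `x` was built. Then fewer than `t` vertices of `h ∩ W` lie outside that layer, so the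
`(t+1)`-colourful colouring is injective on all of `h ∩ W` and `x` is alone in its layer within
`h`. These top vertices of `h` are exactly what a `t`-UM-colouring asks for.
-/

open Finset

section TopVertices

variable {α β γ : Type*} [LinearOrder β] [LinearOrder γ] {t : ℕ} {s : Finset α} {φ : α → β}

def topVertices (t : ℕ) (s : Finset α) (φ : α → β) : Finset α :=
  {x ∈ s | #{u ∈ s | φ x < φ u} < t}

def TopColoursUnique (t : ℕ) (s : Finset α) (φ : α → β) : Prop :=
  ∀ x ∈ topVertices t s φ, ∀ y ∈ s, φ y = φ x → y = x

lemma mem_topVertices {x : α} :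
    x ∈ topVertices t s φ ↔ x ∈ s ∧ #{u ∈ s | φ x < φ u} < t :=
  mem_filter

lemma topVertices_subset : topVertices t s φ ⊆ s :=
  filter_subset _ _

lemma lt_of_mem_topVertices_of_notMem {x y : α} (hx : x ∈ topVertices t s φ) (hy : y ∈ s)
    (hyx : y ∉ topVertices t s φ) : φ y < φ x := by
  rw [mem_topVertices] at hx hyx
  by_contra! hxy
  have : #{u ∈ s | φ y < φ u} ≤ #{u ∈ s | φ x < φ u} :=
    card_le_card fun u hu => by
      simp only [mem_filter] at hu ⊢
      exact ⟨hu.1, hxy.trans_lt hu.2⟩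
  exact hyx ⟨hy, this.trans_lt hx.2⟩

lemma card_topVertices_le (hφ : TopColoursUnique t s φ) : #(topVertices t s φ) ≤ t := by
  classical
  by_contra! hlarge
  obtain ⟨x, hx, hmin⟩ := (topVertices t s φ).exists_min_image φ (card_pos.mp (by omega))
  -- every other top vertex has a colour different from, hence above, that of `x`
  have : (topVertices t s φ).erase x ⊆ {u ∈ s | φ x < φ u} := fun u hu => by
    obtain ⟨hux, hu⟩ := mem_erase.mp hu
    refine mem_filter.mpr ⟨topVertices_subset hu, (hmin u hu).lt_of_ne fun h => hux ?_⟩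
    exact hφ x hx u (topVertices_subset hu) h.symm
  have := card_le_card this
  rw [card_erase_of_mem hx] at this
  have := (mem_topVertices.mp hx).2
  omega

lemma min_card_le_card_topVertices : min #s t ≤ #(topVertices t s φ) := by
  classical
  by_cases hs : s ⊆ topVertices t s φ
  · exact (min_le_left _ _).trans (card_le_card hs)
  obtain ⟨y, hy, hmax⟩ := (s \ topVertices t s φ).exists_max_image φ
    (sdiff_nonempty.mpr hs)
  obtain ⟨hys, hyt⟩ := mem_sdiff.mp hy
  have habove : {u ∈ s | φ y < φ u} ⊆ topVertices t s φ := fun u hu => by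
    obtain ⟨hus, hyu⟩ := mem_filter.mp hu
    by_contra hut
    exact (hmax u (mem_sdiff.mpr ⟨hus, hut⟩)).not_gt hyu
  have : t ≤ #{u ∈ s | φ y < φ u} := by
    by_contra! h
    exact hyt (mem_topVertices.mpr ⟨hys, h⟩)
  exact (min_le_right _ _).trans (this.trans (card_le_card habove))

lemma TopColoursUnique.of_lt_iff {ψ : α → γ} (hφ : TopColoursUnique t s φ)
    (hlt : ∀ x ∈ s, ∀ y ∈ s, ψ x < ψ y ↔ φ x < φ y) : TopColoursUnique t s ψ := by
  have htop : topVertices t s ψ = topVertices t s φ :=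
    filter_congr fun x hx => by
      rw [filter_congr fun u hu => hlt x hx u hu]
  intro x hx y hy hxy
  rw [htop] at hx
  refine hφ x hx y hy (le_antisymm ?_ ?_) <;>
    simp only [← not_lt, ← hlt _ hy _ (topVertices_subset hx),
      ← hlt _ (topVertices_subset hx) _ hy, hxy, lt_irrefl, not_false_eq_true]

theorem isTUMColouring_of_forall_topColoursUnique {E : Set (Finset α)}
    (hφ : ∀ h ∈ E, TopColoursUnique t h φ) : IsTUMColouring t E φ := fun h hh =>
  ⟨topVertices t h φ, topVertices_subset,
    le_antisymm (le_min (card_le_card topVertices_subset) (card_topVertices_le (hφ h hh)))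
      min_card_le_card_topVertices,
    hφ h hh, fun _ hx _ hy hyS => lt_of_mem_topVertices_of_notMem hx hy hyS⟩

end TopVertices

lemma TopColoursUnique.add_bottom_layer {α : Type*} {t : ℕ} {s : Finset α} {p : α → Prop}
    [DecidablePred p] {φ : α → ℕ} (hrest : TopColoursUnique t {v ∈ s | ¬p v} φ)
    (hlayer : #{v ∈ s | ¬p v} < t → ∀ x ∈ s, ∀ y ∈ s, p x → p y → y = x) :
    TopColoursUnique t s fun v => if p v then 0 else φ v + 1 := by
  intro x hx y hy hxy
  obtain ⟨hxs, hfew⟩ := mem_topVertices.mp hx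
  by_cases hpx : p x <;> by_cases hpy : p y <;> simp only [hpx, hpy, if_true, if_false] at hxy hfew
  · refine hlayer (lt_of_le_of_lt (card_le_card fun u hu => ?_) hfew) x hxs y hy hpx hpy
    obtain ⟨hus, hpu⟩ := mem_filter.mp hu
    simp [hus, hpu]
  · omega
  · omega
  · refine hrest x (mem_topVertices.mpr ⟨mem_filter.mpr ⟨hxs, hpx⟩, ?_⟩) y
      (mem_filter.mpr ⟨hy, hpy⟩) (by omega)
    refine lt_of_le_of_lt (card_le_card fun u hu => ?_) hfew
    obtain ⟨⟨hus, hpu⟩, hxu⟩ := mem_filter.mp hu |>.imp_left mem_filter.mp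
    simp [hus, hpu, hxu]

lemma eq_of_colourful_of_card_filter_ne_lt {α β : Type*} [DecidableEq β] {t : ℕ} {s S : Finset α}
    {ψ : α → β} {c : β}
    (hSs : S ⊆ s) (hS : #S = min #s (t + 1)) (hψ : Set.InjOn ψ S)
    (hfew : #{v ∈ s | ψ v ≠ c} < t) {x y : α} (hx : x ∈ s) (hy : y ∈ s)
    (hxc : ψ x = c) (hyc : ψ y = c) : y = x := by
  have hS_c : #{v ∈ S | ψ v = c} ≤ 1 :=
    card_le_one.mpr fun u hu v hv => hψ (mem_filter.mp hu).1 (mem_filter.mp hv).1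
      ((mem_filter.mp hu).2.trans (mem_filter.mp hv).2.symm)
  have hS_ne : #{v ∈ S | ¬ψ v = c} ≤ #{v ∈ s | ψ v ≠ c} :=
    card_le_card (filter_subset_filter _ hSs)
  have := card_filter_add_card_filter_not (s := S) (fun v => ψ v = c)
  -- `S` has at most `t` vertices, so it is all of `s`
  have hSeq : S = s := eq_of_subset_of_card_le hSs (by omega)
  subst hSeq
  exact hψ hy hx (hyc.trans hxc.symm)

lemma one_add_mul_log_le_mul_log {k m n : ℝ} (hk : 0 < k) (hm : 0 < m) (hn : 0 < n)
    (hmn : k * m ≤ (k - 1) * n) : 1 + k * Real.log m ≤ k * Real.log n := by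
  have hlog : Real.log m - Real.log n ≤ m / n - 1 := by
    rw [← Real.log_div hm.ne' hn.ne']
    exact Real.log_le_sub_one_of_pos (by positivity)
  have hratio : k * (m / n - 1) ≤ -1 := by
    have : k * m / n ≤ k - 1 := by rw [div_le_iff₀ hn]; linarith
    rw [mul_sub, mul_one, ← mul_div_assoc]
    linarith
  nlinarith

lemma one_add_mul_log_le_two_mul_mul_logb {k n : ℝ} (hk : 1 ≤ k) (hn : 2 ≤ n) :
    1 + k * Real.log n ≤ 2 * k * Real.logb 2 n := by
  have hone : 1 ≤ Real.logb 2 n := by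
    rw [Real.le_logb_iff_rpow_le one_lt_two (by linarith)]
    simpa using hn
  have hlog : Real.log n ≤ Real.logb 2 n := by
    have h2 : Real.log 2 < 1 := Real.log_two_lt_d9.trans (by norm_num)
    rw [← Real.log_div_log, le_div_iff₀ (Real.log_pos one_lt_two)]
    nlinarith [Real.log_nonneg (by linarith : (1 : ℝ) ≤ n)]
  nlinarith

lemma exists_card_le_mul_card_fiber {α β : Type*} [Fintype β] [DecidableEq β] (f : α → β)
    {s : Finset α} (hs : s.Nonempty) : ∃ b, #s ≤ Fintype.card β * #{v ∈ s | f v = b} := by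
  have hβ : (0 : ℝ) < Fintype.card β := by
    exact_mod_cast Fintype.card_pos_iff.mpr ⟨f hs.choose⟩
  obtain ⟨b, -, hb⟩ := exists_le_card_fiber_of_nsmul_le_card_of_maps_to (s := s)
    (fun v _ => mem_univ (f v)) ⟨f hs.choose, mem_univ _⟩ (b := (#s : ℝ) / Fintype.card β)
    (by simp [card_univ, mul_div_cancel₀ _ hβ.ne'])
  refine ⟨b, ?_⟩
  rw [div_le_iff₀ hβ, mul_comm] at hb
  exact_mod_cast hb

lemma natCast_add_one_le_one_add_mul_log {k : ℝ} {N m n : ℕ} (hk : 0 < k) (hn : 0 < n)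
    (hNm : N ≤ m) (hN : (N : ℝ) ≤ 1 + k * Real.log m) (hmn : k * m ≤ (k - 1) * n) :
    ((N + 1 : ℕ) : ℝ) ≤ 1 + k * Real.log n := by
  push_cast
  rcases m.eq_zero_or_pos with rfl | hm
  · obtain rfl : N = 0 := by omega
    simp only [Nat.cast_zero, zero_add, le_add_iff_nonneg_right]
    exact mul_nonneg hk.le (Real.log_natCast_nonneg n)
  · have := one_add_mul_log_le_mul_log hk (by exact_mod_cast hm) (by exact_mod_cast hn) hmn
    linarith

theorem exists_layered_colouring {α : Type*} [DecidableEq α] {t k : ℕ} (E : Set (Finset α))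
    (W : Finset α)
    (hcol : ∀ W' ⊆ W, ∃ ψ : α → Fin k,
      IsColourfulColouring (t + 1) {h' | ∃ h ∈ E, h' = h ∩ W'} ψ) :
    ∃ (N : ℕ) (φ : α → ℕ), N ≤ #W ∧ (N : ℝ) ≤ 1 + k * Real.log #W ∧ (∀ v ∈ W, φ v < N) ∧
      ∀ h ∈ E, TopColoursUnique t (h ∩ W) φ := by
  induction W using Finset.strongInduction with | H W ih =>
  rcases W.eq_empty_or_nonempty with rfl | hW
  · refine ⟨0, 0, le_rfl, by simp, by simp, fun h _ x hx => ?_⟩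
    simp [topVertices] at hx
  obtain ⟨ψ, hψ⟩ := hcol W subset_rfl
  -- the largest colour class of `ψ` becomes the bottom layer
  obtain ⟨b, hb⟩ := exists_card_le_mul_card_fiber ψ hW
  rw [Fintype.card_fin] at hb
  have hsplit := card_filter_add_card_filter_not (s := W) (fun v => ψ v = b)
  obtain ⟨a, ha⟩ : {v ∈ W | ψ v = b}.Nonempty := by
    rw [← card_pos]
    nlinarith [hW.card_pos]
  have hW'W : {v ∈ W | ¬ψ v = b} ⊂ W :=
    filter_ssubset.mpr ⟨a, (mem_filter.mp ha).1, not_not.mpr (mem_filter.mp ha).2⟩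
  obtain ⟨N, φ, hNW', hNlog, hφ, htop⟩ :=
    ih _ hW'W fun V' hV' => hcol V' (hV'.trans (filter_subset _ _))
  refine ⟨N + 1, fun v => if ψ v = b then 0 else φ v + 1,
    hNW'.trans_lt (card_lt_card hW'W), ?_, fun v hv => ?_, fun h hh => ?_⟩
  · have hk : (0 : ℝ) < k := by exact_mod_cast (ψ a).pos
    refine natCast_add_one_le_one_add_mul_log hk hW.card_pos hNW' hNlog ?_
    have hsplit' : (#{v ∈ W | ψ v = b} : ℝ) + #{v ∈ W | ¬ψ v = b} = #W := by
      exact_mod_cast hsplit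
    have hb' : (#W : ℝ) ≤ k * #{v ∈ W | ψ v = b} := by exact_mod_cast hb
    nlinarith
  · dsimp only
    split_ifs with hvb
    · omega
    · exact Nat.succ_lt_succ (hφ v (mem_filter.mpr ⟨hv, hvb⟩))
  · refine TopColoursUnique.add_bottom_layer ?_ fun hfew x hx y hy hxb hyb => ?_
    · rw [← inter_filter]
      exact htop h hh
    · obtain ⟨S, hSs, hS, hinj⟩ := hψ (h ∩ W) ⟨h, hh, rfl⟩
      exact eq_of_colourful_of_card_filter_ne_lt hSs hS hinj hfew hx hy hxb hyb

theorem stmt_7 :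
    ∃ C : ℝ, 0 < C ∧
      ∀ (t k : ℕ), 1 ≤ t → 1 ≤ k →
        ∀ (α : Type) [DecidableEq α], ∀ (V : Finset α) (E : Set (Finset α)),
          (∀ h ∈ E, h ⊆ V) → 2 ≤ V.card →
          (∀ V' ⊆ V, ∃ φ : α → Fin k,
            IsColourfulColouring (t + 1) {h' | ∃ h ∈ E, h' = h ∩ V'} φ) →
          ∃ k' : ℕ, (k' : ℝ) ≤ C * (k : ℝ) * Real.logb 2 V.card ∧
            ∃ φ : α → Fin k', IsTUMColouring t E φ := by
  refine ⟨2, two_pos, fun t k _ hk α _ V E hEV hV hcol => ?_⟩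
  obtain ⟨N, φ, -, hNlog, hφ, htop⟩ := exists_layered_colouring E V hcol
  have hN : 0 < N := (Nat.zero_le _).trans_lt (hφ _ (card_pos.mp (by omega)).choose_spec)
  refine ⟨N, hNlog.trans (one_add_mul_log_le_two_mul_mul_logb (by exact_mod_cast hk)
    (by exact_mod_cast hV)), fun v => ⟨φ v % N, Nat.mod_lt _ hN⟩,
    isTUMColouring_of_forall_topColoursUnique fun h hh => ?_⟩
  have hφh : ∀ v ∈ h, φ v % N = φ v := fun v hv => Nat.mod_eq_of_lt (hφ v (hEV h hh hv))
  refine (inter_eq_left.mpr (hEV h hh) ▸ htop h hh).of_lt_iff fun x hx y hy => ?_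
  change φ x % N < φ y % N ↔ φ x < φ y
  rw [hφh x hx, hφh y hy]
end

section
/- Let t ≥ 1 and let H be a hypergraph that admits a t-strong-CF-colouring with k colours. Then χ^t_CF(H) ≤ k^t. (In fact, assigning to each t-element subset {v_{i₁}, …, v_{i_t}} of vertices, listed in a fixed linear order of V, the tuple of colours of its elements yields a t-subset-CF-colouring with at most k^t colours.) -/
/-- A `t`-strong-CF-colouring: every hyperedge `h` contains at least `min |h| t` vertices
whose colours appear exactly once in `h`. -/
def IsStrongCFColouring {α β : Type*} (t : ℕ) (E : Set (Finset α)) (φ : α → β) : Prop :=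
  ∀ h ∈ E, ∃ S : Finset α, S ⊆ h ∧ S.card = min h.card t ∧
    ∀ x ∈ S, ∀ y ∈ h, φ y = φ x → y = x

/-!
Colour a `t`-set by the multiset of the colours of its elements. If `S ⊆ h` consists of `t`
vertices whose colours are unique in `h`, then any `t`-set `S' ⊆ h` with the same colour
multiset contains every vertex of `S`, hence equals `S`. A multiset of `t` colours out of `k` is
the multiset of values of some `Fin t → Fin k`, so at most `k ^ t` such multisets occur.
-/

theorem Multiset.exists_map_univ_val_eq {β : Type*} {t : ℕ} {m : Multiset β}
    (hm : Multiset.card m = t) : ∃ f : Fin t → β, Finset.univ.val.map f = m := by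
  obtain ⟨l, rfl⟩ := Quot.exists_rep m
  obtain rfl : l.length = t := hm
  exact ⟨fun i => l[i], by simp⟩

theorem Multiset.exists_injOn_card_eq (β : Type*) [Nonempty β] (t : ℕ) :
    ∃ g : Multiset β → (Fin t → β), Set.InjOn g {m | Multiset.card m = t} := by
  refine ⟨Function.invFunOn (fun f : Fin t → β => Finset.univ.val.map f) Set.univ,
    (Function.invFunOn_injOn_image _ _).mono fun m hm => ?_⟩
  obtain ⟨f, hf⟩ := Multiset.exists_map_univ_val_eq hm
  exact ⟨f, Set.mem_univ f, hf⟩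

theorem Finset.eq_of_map_val_eq_of_forall_unique {α β : Type*} {φ : α → β} {S S' h : Finset α}
    (hS' : S' ⊆ h) (huniq : ∀ x ∈ S, ∀ y ∈ h, φ y = φ x → y = x)
    (hmap : S'.val.map φ = S.val.map φ) : S' = S := by
  have hsub : S ⊆ S' := by
    intro x hx
    obtain ⟨y, hy, hyx⟩ := Multiset.mem_map.mp (hmap ▸ Multiset.mem_map_of_mem φ hx)
    exact huniq x hx y (hS' hy) hyx ▸ hy
  have hcard : S'.card = S.card := by
    simpa using congrArg Multiset.card hmap
  exact (Finset.eq_of_subset_of_card_le hsub hcard.le).symm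

theorem IsStrongCFColouring.isSubsetCFColouring_map_val {α β : Type*} {t : ℕ}
    {E : Set (Finset α)} {φ : α → β} (hφ : IsStrongCFColouring t E φ) :
    IsSubsetCFColouring t E fun S => S.val.map φ := by
  intro h hh hlt
  obtain ⟨S, hSh, hScard, huniq⟩ := hφ h hh
  refine ⟨S, hSh, by omega, fun S' hS'h _ hne hmap => ?_⟩
  exact hne (Finset.eq_of_map_val_eq_of_forall_unique hS'h huniq hmap)

theorem IsSubsetCFColouring.comp_of_injOn {α β γ : Type*} {t : ℕ} {E : Set (Finset α)}
    {ψ : Finset α → β} {g : β → γ} {s : Set β} (hψ : IsSubsetCFColouring t E ψ)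
    (hg : Set.InjOn g s) (hs : ∀ S : Finset α, S.card = t → ψ S ∈ s) :
    IsSubsetCFColouring t E (g ∘ ψ) := by
  intro h hh hlt
  obtain ⟨S, hSh, hSt, hS⟩ := hψ h hh hlt
  exact ⟨S, hSh, hSt, fun S' hS'h hS't hne heq =>
    hS S' hS'h hS't hne (hg (hs S' hS't) (hs S hSt) heq)⟩

theorem stmt_8_general {α : Type*} (t k : ℕ) (hk : 1 ≤ k)
    (E : Set (Finset α)) (φ : α → Fin k) (hφ : IsStrongCFColouring t E φ) :
    ∃ ψ : Finset α → Fin (k ^ t), IsSubsetCFColouring t E ψ := by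
  have : Nonempty (Fin k) := ⟨⟨0, hk⟩⟩
  obtain ⟨g, hg⟩ := Multiset.exists_injOn_card_eq (Fin k) t
  exact ⟨finFunctionFinEquiv ∘ g ∘ fun S => S.val.map φ,
    hφ.isSubsetCFColouring_map_val.comp_of_injOn (finFunctionFinEquiv.injective.comp_injOn hg)
      fun S hS => by simpa using hS⟩

theorem stmt_8 {α : Type*} (t k : ℕ) (ht : 1 ≤ t) (hk : 1 ≤ k)
    (E : Set (Finset α)) (φ : α → Fin k) (hφ : IsStrongCFColouring t E φ) :
    ∃ ψ : Finset α → Fin (k ^ t), IsSubsetCFColouring t E ψ :=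
  stmt_8_general t k hk E φ hφ
end

section
/- Let t ≥ 1 and let H = (V, E) be a hypergraph that admits a t-UM-colouring φ : V → {1, …, k}. Then the colouring of t-element subsets defined by S ↦ Σ_{v ∈ S} φ(v) is a t-subset-CF-colouring of H; in particular χ^t_CF(H) ≤ t · k. -/
open Finset

namespace Finset

variable {ι M : Type*} [AddCommMonoid M] [LinearOrder M] [IsOrderedCancelAddMonoid M]
  {f : ι → M}

lemma sum_lt_sum_of_card_eq_of_forall_lt {A B : Finset ι} (hcard : #A = #B) (hA : A.Nonempty)
    (hlt : ∀ a ∈ A, ∀ b ∈ B, f a < f b) : ∑ a ∈ A, f a < ∑ b ∈ B, f b := by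
  have hB : B.Nonempty := card_pos.mp (hcard ▸ card_pos.mpr hA)
  obtain ⟨m, hmB, hm⟩ := B.exists_min_image f hB
  calc ∑ a ∈ A, f a < ∑ _a ∈ A, f m := sum_lt_sum_of_nonempty hA fun a ha ↦ hlt a ha m hmB
    _ = #B • f m := by rw [sum_const, hcard]
    _ ≤ ∑ b ∈ B, f b := card_nsmul_le_sum B f (f m) hm

lemma sum_lt_sum_of_card_eq_of_forall_sdiff_lt [DecidableEq ι] {h S S' : Finset ι}
    (hS' : S' ⊆ h) (hcard : #S' = #S) (hne : S' ≠ S)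
    (htop : ∀ x ∈ S, ∀ y ∈ h, y ∉ S → f y < f x) : ∑ i ∈ S', f i < ∑ i ∈ S, f i := by
  rw [← sum_sdiff_lt_sum_sdiff]
  have hdiff : (S' \ S).Nonempty := by
    rw [sdiff_nonempty]
    exact fun hsub ↦ hne (eq_of_subset_of_card_le hsub hcard.ge)
  refine sum_lt_sum_of_card_eq_of_forall_lt (card_sdiff_comm hcard) hdiff fun a ha b hb ↦ ?_
  rw [mem_sdiff] at ha hb
  exact htop b hb.1 a (hS' ha.1) ha.2

end Finset

section Colourings

variable {α : Type*} {t : ℕ} {E : Set (Finset α)}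

theorem IsTUMColouring.isSubsetCFColouring_sum {M : Type*} [AddCommMonoid M] [LinearOrder M]
    [IsOrderedCancelAddMonoid M] {φ : α → M} (hφ : IsTUMColouring t E φ) :
    IsSubsetCFColouring t E (fun S ↦ ∑ v ∈ S, φ v) := by
  classical
  intro h hh hlt
  obtain ⟨S, hSh, hS, -, htop⟩ := hφ h hh
  rw [min_eq_right hlt.le] at hS
  refine ⟨S, hSh, hS, fun S' hS'h hS' hne ↦ ?_⟩
  exact (sum_lt_sum_of_card_eq_of_forall_sdiff_lt hS'h (hS'.trans hS.symm) hne htop).ne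

theorem IsSubsetCFColouring.comp {β γ : Type*} {φ : Finset α → β}
    (hφ : IsSubsetCFColouring t E φ) {g : β → γ} (hg : Set.InjOn g (φ '' {S | #S = t})) :
    IsSubsetCFColouring t E (g ∘ φ) := by
  intro h hh hlt
  obtain ⟨S, hSh, hS, huniq⟩ := hφ h hh hlt
  exact ⟨S, hSh, hS, fun S' hS'h hS' hne ↦
    hg.ne ⟨S', hS', rfl⟩ ⟨S, hS, rfl⟩ (huniq S' hS'h hS' hne)⟩

lemma sum_mem_Icc_of_card_eq {φ : α → ℕ} {k : ℕ} (hrange : ∀ v, φ v ∈ Icc 1 k) {S : Finset α}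
    (hS : #S = t) : ∑ v ∈ S, φ v ∈ Set.Icc t (t * k) := by
  constructor
  · simpa [hS] using card_nsmul_le_sum S φ 1 fun v _ ↦ (mem_Icc.mp (hrange v)).1
  · simpa [hS] using sum_le_card_nsmul S φ k fun v _ ↦ (mem_Icc.mp (hrange v)).2

lemma Fin.injOn_ofNat_sub_Icc {n : ℕ} [NeZero n] (ht : 1 ≤ t) :
    Set.InjOn (fun m ↦ Fin.ofNat n (m - t)) (Set.Icc t n) := by
  intro a ⟨hta, han⟩ b ⟨htb, hbn⟩ hab
  rw [Fin.ext_iff, Fin.val_ofNat, Fin.val_ofNat, Nat.mod_eq_of_lt (by omega),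
    Nat.mod_eq_of_lt (by omega)] at hab
  omega

end Colourings

theorem stmt_9 {α : Type*} (t k : ℕ) (ht : 1 ≤ t) (hk : 1 ≤ k)
    (E : Set (Finset α)) (φ : α → ℕ)
    (hrange : ∀ v, φ v ∈ Finset.Icc 1 k)
    (hφ : IsTUMColouring t E φ) :
    IsSubsetCFColouring t E (fun S => S.sum φ) ∧
      ∃ ψ : Finset α → Fin (t * k), IsSubsetCFColouring t E ψ := by
  have hsum := hφ.isSubsetCFColouring_sum
  have : NeZero (t * k) := ⟨by positivity⟩
  refine ⟨hsum, _, hsum.comp ((Fin.injOn_ofNat_sub_Icc ht).mono ?_)⟩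
  rintro _ ⟨S, hS, rfl⟩
  exact sum_mem_Icc_of_card_eq hrange hS
end

section
/- For every n ≥ 1, let H^∪ be the hypergraph with vertex set {1, …, n} whose hyperedges are all unions I ∪ J of two discrete intervals I = {i, …, j} and J = {k, …, l} with 1 ≤ i ≤ j ≤ n and 1 ≤ k ≤ l ≤ n. Then χ²_CF(H^∪) ≤ 4 · ⌈log₂(n+1)⌉, i.e. there is a colouring of the 2-element subsets of {1, …, n} with at most 4⌈log₂(n+1)⌉ colours such that every hyperedge of H^∪ of size at least 3 contains a pair whose colour differs from that of every other pair in the hyperedge. -/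
/-- The hyperedges of `H^∪`: all unions of two discrete intervals
`{i,…,j} ∪ {k,…,l}` with `1 ≤ i ≤ j ≤ n` and `1 ≤ k ≤ l ≤ n`. -/
def unionIntervalEdges (n : ℕ) : Set (Finset ℕ) :=
  {e | ∃ i j k l : ℕ, 1 ≤ i ∧ i ≤ j ∧ j ≤ n ∧ 1 ≤ k ∧ k ≤ l ∧ l ≤ n ∧
    e = Finset.Icc i j ∪ Finset.Icc k l}

/-!
Colour a pair `x < y` by the 2-adic valuations `ν` of its ends: an adjacent pair `{x, x + 1}`
gets `ν` of its even element, shifted by `L` when that element is `x + 1`, and any other pair gets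
`2L + ν x + ν y`; with `L = ⌈log₂ (n + 1)⌉` these are `4L` colours. Between two numbers with the
same valuation lies one with a larger valuation, so on an interval `ν` has a unique maximiser.
If the maximiser `m` of `ν` over a hyperedge is unique and has a neighbour in it, the adjacent
pair at `m` has a unique colour. Otherwise the hyperedge is two separated intervals whose
maximisers `m₁ < m₂` beat every other element, and `{m₁, m₂}` is the only pair of maximal
valuation sum.
-/

open Finset

section

local notation "ν" => padicValNat 2

def IsStrictMaxOn {α β : Type*} [Preorder β] (f : α → β) (s : Finset α) (a : α) : Prop :=
  a ∈ s ∧ ∀ x ∈ s, x ≠ a → f x < f a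

lemma IsStrictMaxOn.le {α β : Type*} [Preorder β] {f : α → β} {s : Finset α} {a x : α}
    (ha : IsStrictMaxOn f s a) (hx : x ∈ s) : f x ≤ f a := by
  obtain rfl | hxa := eq_or_ne x a
  · exact le_rfl
  · exact (ha.2 x hx hxa).le

def pairColouring {β : Type*} (c : ℕ → ℕ → β) (S : Finset ℕ) : β :=
  if hS : S.Nonempty then c (S.min' hS) (S.max' hS) else c 0 0

def pairColour (L x y : ℕ) : ℕ :=
  if y = x + 1 then (if 2 ∣ x then ν x else L + ν y) else 2 * L + ν x + ν y

def IsUniquelyColouredPair {β : Type*} (c : ℕ → ℕ → β) (h : Finset ℕ) (x y : ℕ) : Prop :=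
  x ∈ h ∧ y ∈ h ∧ x < y ∧ ∀ x' ∈ h, ∀ y' ∈ h, x' < y' → c x' y' = c x y → x' = x ∧ y' = y

lemma exists_lt_padicValNat_two_of_eq {x y : ℕ} (hx : x ≠ 0) (hxy : x < y) (h : ν x = ν y) :
    ∃ z, x < z ∧ z < y ∧ ν x < ν z := by
  obtain ⟨t, ht⟩ : ∃ t, ν x = t := ⟨_, rfl⟩
  have hy : y ≠ 0 := by omega
  have hdx : 2 ^ t ∣ x := ht ▸ pow_padicValNat_dvd
  have hdy : 2 ^ t ∣ y := (h ▸ ht) ▸ pow_padicValNat_dvd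
  have hnx : ¬ 2 ^ (t + 1) ∣ x := ht ▸ pow_succ_padicValNat_not_dvd hx
  have hny : ¬ 2 ^ (t + 1) ∣ y := (h ▸ ht) ▸ pow_succ_padicValNat_not_dvd hy
  rw [ht]
  clear h ht
  obtain ⟨a, rfl⟩ := hdx
  obtain ⟨b, rfl⟩ := hdy
  -- `a < b` are odd, so `2 ^ t * (a + 1)` lies strictly between and is divisible by `2 ^ (t + 1)`.
  have hpos : 0 < 2 ^ t := by positivity
  have hodd : ∀ c, ¬ 2 ^ (t + 1) ∣ 2 ^ t * c → ¬ 2 ∣ c := fun c hc h2 =>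
    hc (pow_succ 2 t ▸ Nat.mul_dvd_mul_left _ h2)
  have hab : a < b := Nat.lt_of_mul_lt_mul_left hxy
  have ha := hodd a hnx
  have hb := hodd b hny
  refine ⟨2 ^ t * (a + 1), Nat.mul_lt_mul_of_pos_left (by omega) hpos,
    Nat.mul_lt_mul_of_pos_left (by omega) hpos, ?_⟩
  rw [← Nat.succ_le_iff, ← padicValNat_dvd_iff_le (by positivity), pow_succ]
  exact Nat.mul_dvd_mul_left _ (by omega)

lemma exists_isStrictMaxOn_padicValNat_two_Icc {a b : ℕ} (ha : a ≠ 0) (hab : a ≤ b) :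
    ∃ m, IsStrictMaxOn ν (Icc a b) m := by
  obtain ⟨m, hm, hmax⟩ := (Icc a b).exists_max_image ν (nonempty_Icc.2 hab)
  have htie : ∀ u ∈ Icc a b, ∀ v ∈ Icc a b, u < v → ν u = ν v → ν u < ν m := by
    intro u hu v hv huv heq
    have := mem_Icc.1 hu
    have := mem_Icc.1 hv
    obtain ⟨z, huz, hzv, hlt⟩ := exists_lt_padicValNat_two_of_eq (by omega) huv heq
    exact hlt.trans_le (hmax z (mem_Icc.2 ⟨by omega, by omega⟩))
  refine ⟨m, hm, fun x hx hxm => (hmax x hx).lt_of_ne fun heq => ?_⟩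
  rcases hxm.lt_or_gt with hlt | hlt
  · exact (htie x hx m hm hlt heq).ne heq
  · exact (htie m hm x hx hlt heq.symm).ne rfl

lemma padicValNat_two_lt_clog {n v : ℕ} (hv : v ≠ 0) (hvn : v ≤ n) :
    ν v < Nat.clog 2 (n + 1) :=
  (Nat.lt_clog_iff_pow_lt one_lt_two).2 <|
    (Nat.le_of_dvd (Nat.pos_of_ne_zero hv) pow_padicValNat_dvd).trans_lt (by omega)

lemma pairColouring_pair {β : Type*} (c : ℕ → ℕ → β) {x y : ℕ} (hxy : x < y) :
    pairColouring c {x, y} = c x y := by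
  simp [pairColouring, hxy.le]

lemma pairColour_lt {L x y : ℕ} (hx : ν x < L) (hy : ν y < L) : pairColour L x y < 4 * L := by
  unfold pairColour
  split_ifs <;> omega

namespace IsUniquelyColouredPair

variable {β : Type*} {h : Finset ℕ} {x y : ℕ}

lemma exists_subset_card_eq_two {c : ℕ → ℕ → β} (hxy : IsUniquelyColouredPair c h x y) :
    ∃ S : Finset ℕ, S ⊆ h ∧ S.card = 2 ∧
      ∀ S' : Finset ℕ, S' ⊆ h → S'.card = 2 → S' ≠ S → pairColouring c S' ≠ pairColouring c S := by
  obtain ⟨hx, hy, hlt, huniq⟩ := hxy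
  have hpair : ∀ u ∈ h, ∀ v ∈ h, u < v → ({u, v} : Finset ℕ) ≠ {x, y} →
      pairColouring c {u, v} ≠ pairColouring c {x, y} := by
    intro u hu v hv huv hne heq
    rw [pairColouring_pair c huv, pairColouring_pair c hlt] at heq
    obtain ⟨rfl, rfl⟩ := huniq u hu v hv huv heq
    exact hne rfl
  refine ⟨{x, y}, insert_subset hx (singleton_subset_iff.2 hy), card_pair hlt.ne, ?_⟩
  intro S' hS' hcard hne
  obtain ⟨u, v, huv, rfl⟩ := card_eq_two.1 hcard
  have hu : u ∈ h := hS' (by simp)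
  have hv : v ∈ h := hS' (by simp)
  rcases huv.lt_or_gt with hlt' | hlt'
  · exact hpair u hu v hv hlt' hne
  · rw [pair_comm u v] at hne ⊢
    exact hpair v hv u hu hlt' hne

lemma finOfNat {N : ℕ} [NeZero N] {c : ℕ → ℕ → ℕ} (hc : ∀ u ∈ h, ∀ v ∈ h, c u v < N)
    (hxy : IsUniquelyColouredPair c h x y) :
    IsUniquelyColouredPair (fun u v => Fin.ofNat N (c u v)) h x y := by
  obtain ⟨hx, hy, hlt, huniq⟩ := hxy
  refine ⟨hx, hy, hlt, fun u hu v hv huv heq => huniq u hu v hv huv ?_⟩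
  have := congrArg Fin.val heq
  rwa [Fin.val_ofNat, Fin.val_ofNat, Nat.mod_eq_of_lt (hc u hu v hv),
    Nat.mod_eq_of_lt (hc x hx y hy)] at this

end IsUniquelyColouredPair

variable {L : ℕ} {h : Finset ℕ}

lemma isUniquelyColouredPair_of_isStrictMaxOn_left (hL : ∀ v ∈ h, ν v < L) {w : ℕ}
    (hw : IsStrictMaxOn ν h w) (hsucc : w + 1 ∈ h) :
    IsUniquelyColouredPair (pairColour L) h w (w + 1) := by
  obtain ⟨hwh, hmax⟩ := hw
  have heven : 2 ∣ w := dvd_of_one_le_padicValNat <| by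
    have := hmax (w + 1) hsucc (by omega)
    omega
  refine ⟨hwh, hsucc, by omega, fun x hx y hy hxy heq => ?_⟩
  have hw' : pairColour L w (w + 1) = ν w := by simp [pairColour, heven]
  have := hL w hwh
  rw [hw'] at heq
  unfold pairColour at heq
  split_ifs at heq with hadj hx2
  · by_contra hne
    have := hmax x hx (by omega)
    omega
  · omega
  · have := hL x hx
    omega

lemma isUniquelyColouredPair_of_isStrictMaxOn_right (hL : ∀ v ∈ h, ν v < L) {w : ℕ}
    (hw : IsStrictMaxOn ν h (w + 1)) (hpred : w ∈ h) :
    IsUniquelyColouredPair (pairColour L) h w (w + 1) := by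
  obtain ⟨hwh, hmax⟩ := hw
  have hodd : ¬ 2 ∣ w := fun h2 => by
    have := hmax w hpred (by omega)
    have := dvd_of_one_le_padicValNat (p := 2) (n := w + 1) (by omega)
    omega
  refine ⟨hpred, hwh, by omega, fun x hx y hy hxy heq => ?_⟩
  have hw' : pairColour L w (w + 1) = L + ν (w + 1) := by simp [pairColour, hodd]
  have := hL (w + 1) hwh
  rw [hw'] at heq
  unfold pairColour at heq
  split_ifs at heq with hadj hx2
  · have := hL x hx
    omega
  · by_contra hne
    have := hmax y hy (by omega)
    omega
  · have := hL x hx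
    have := hL y hy
    omega

lemma exists_isUniquelyColouredPair_of_isStrictMaxOn (hL : ∀ v ∈ h, ν v < L) {a b m : ℕ}
    (hsub : Icc a b ⊆ h) (hab : a < b) (hm : m ∈ Icc a b) (hmax : IsStrictMaxOn ν h m) :
    ∃ x y, IsUniquelyColouredPair (pairColour L) h x y := by
  have := mem_Icc.1 hm
  rcases lt_or_ge m b with hmb | hmb
  · exact ⟨m, m + 1, isUniquelyColouredPair_of_isStrictMaxOn_left hL hmax
      (hsub (mem_Icc.2 ⟨by omega, by omega⟩))⟩
  · obtain ⟨w, rfl⟩ : ∃ w, m = w + 1 := ⟨m - 1, by omega⟩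
    exact ⟨w, w + 1, isUniquelyColouredPair_of_isStrictMaxOn_right hL hmax
      (hsub (mem_Icc.2 ⟨by omega, by omega⟩))⟩

lemma isUniquelyColouredPair_of_top_two (hL : ∀ v ∈ h, ν v < L) {u v : ℕ} (hu : u ∈ h)
    (hv : v ∈ h) (huv : u + 1 < v) (htop : ∀ x ∈ h, x = u ∨ x = v ∨ ν x < ν u ∧ ν x < ν v) :
    IsUniquelyColouredPair (pairColour L) h u v := by
  refine ⟨hu, hv, by omega, fun x hx y hy hxy heq => ?_⟩
  have huv' : pairColour L u v = 2 * L + ν u + ν v := by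
    simp [pairColour, show v ≠ u + 1 by omega]
  rw [huv'] at heq
  unfold pairColour at heq
  have := hL x hx
  have := hL y hy
  split_ifs at heq
  · omega
  · omega
  · rcases htop x hx with rfl | rfl | hx' <;> rcases htop y hy with rfl | rfl | hy' <;> omega

/-- `m` then beats everything in `s` as well, and `x` makes the interval long enough for `m` to
have a neighbour in it. -/
lemma exists_isUniquelyColouredPair_Icc_union {a b m x t : ℕ} {s : Finset ℕ}
    (hL : ∀ v ∈ Icc a b ∪ s, ν v < L) (hm : IsStrictMaxOn ν (Icc a b) m) (hs : ∀ y ∈ s, ν y ≤ t)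
    (hx : x ∈ Icc a b) (hxm : x ≠ m) (htx : t ≤ ν x) :
    ∃ p q, IsUniquelyColouredPair (pairColour L) (Icc a b ∪ s) p q := by
  obtain ⟨hmI, hmax⟩ := hm
  have hxlt := hmax x hx hxm
  have hab : a < b := by
    have := mem_Icc.1 hx
    have := mem_Icc.1 hmI
    omega
  refine exists_isUniquelyColouredPair_of_isStrictMaxOn hL subset_union_left hab hmI
    ⟨mem_union_left _ hmI, fun y hy hym => ?_⟩
  rcases mem_union.1 hy with hy | hy
  · exact hmax y hy hym
  · exact (hs y hy).trans_lt (htx.trans_lt hxlt)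

lemma exists_isUniquelyColouredPair_Icc_union_Icc_of_gap {a b c d : ℕ} (ha : a ≠ 0)
    (hab : a ≤ b) (hbc : b + 1 < c) (hcd : c ≤ d) (hL : ∀ v ∈ Icc a b ∪ Icc c d, ν v < L) :
    ∃ p q, IsUniquelyColouredPair (pairColour L) (Icc a b ∪ Icc c d) p q := by
  obtain ⟨m₁, hm₁⟩ := exists_isStrictMaxOn_padicValNat_two_Icc ha hab
  obtain ⟨m₂, hm₂⟩ := exists_isStrictMaxOn_padicValNat_two_Icc (by omega : c ≠ 0) hcd
  by_cases h₁ : ∃ x ∈ Icc a b, x ≠ m₁ ∧ ν m₂ ≤ ν x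
  · obtain ⟨x, hx, hxm, htx⟩ := h₁
    exact exists_isUniquelyColouredPair_Icc_union hL hm₁ (fun _ => hm₂.le) hx hxm htx
  by_cases h₂ : ∃ x ∈ Icc c d, x ≠ m₂ ∧ ν m₁ ≤ ν x
  · obtain ⟨x, hx, hxm, htx⟩ := h₂
    rw [union_comm] at hL ⊢
    exact exists_isUniquelyColouredPair_Icc_union hL hm₂ (fun _ => hm₁.le) hx hxm htx
  push Not at h₁ h₂
  have hm₁I := mem_Icc.1 hm₁.1
  have hm₂I := mem_Icc.1 hm₂.1
  refine ⟨m₁, m₂, isUniquelyColouredPair_of_top_two hL (mem_union_left _ hm₁.1)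
    (mem_union_right _ hm₂.1) (by omega) fun x hx => ?_⟩
  rcases mem_union.1 hx with hx | hx
  · exact (eq_or_ne x m₁).imp_right fun hxm => Or.inr ⟨hm₁.2 x hx hxm, h₁ x hx hxm⟩
  · exact Or.inr <| (eq_or_ne x m₂).imp_right fun hxm => ⟨h₂ x hx hxm, hm₂.2 x hx hxm⟩

lemma exists_isUniquelyColouredPair_Icc_union_Icc {i j k l : ℕ} (hi : i ≠ 0) (hij : i ≤ j)
    (hk : k ≠ 0) (hkl : k ≤ l) (hcard : 2 < (Icc i j ∪ Icc k l).card)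
    (hL : ∀ v ∈ Icc i j ∪ Icc k l, ν v < L) :
    ∃ x y, IsUniquelyColouredPair (pairColour L) (Icc i j ∪ Icc k l) x y := by
  by_cases hjk : j + 1 < k
  · exact exists_isUniquelyColouredPair_Icc_union_Icc_of_gap hi hij hjk hkl hL
  by_cases hli : l + 1 < i
  · rw [union_comm] at hL ⊢
    exact exists_isUniquelyColouredPair_Icc_union_Icc_of_gap hk hkl hli hij hL
  have hIcc : Icc i j ∪ Icc k l = Icc (min i k) (max j l) := by
    ext v
    simp only [mem_union, mem_Icc]
    omega
  rw [hIcc] at hcard hL ⊢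
  rw [Nat.card_Icc] at hcard
  obtain ⟨m, hm⟩ := exists_isStrictMaxOn_padicValNat_two_Icc (by omega : min i k ≠ 0)
    (by omega : min i k ≤ max j l)
  exact exists_isUniquelyColouredPair_of_isStrictMaxOn hL subset_rfl (by omega) hm.1 hm

end

theorem stmt_15 (n : ℕ) (hn : 1 ≤ n) :
    ∃ φ : Finset ℕ → Fin (4 * Nat.clog 2 (n + 1)),
      IsSubsetCFColouring 2 (unionIntervalEdges n) φ := by
  set L := Nat.clog 2 (n + 1)
  have : NeZero (4 * L) := ⟨by have := Nat.clog_pos one_lt_two (by omega : 1 < n + 1); omega⟩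
  refine ⟨pairColouring fun x y => Fin.ofNat (4 * L) (pairColour L x y), ?_⟩
  rintro _ ⟨i, j, k, l, hi, hij, hjn, hk, hkl, hln, rfl⟩ hcard
  have hL : ∀ v ∈ Icc i j ∪ Icc k l, padicValNat 2 v < L := by
    intro v hv
    have := mem_union.1 hv
    simp only [mem_Icc] at this
    exact padicValNat_two_lt_clog (by omega) (by omega)
  obtain ⟨x, y, hxy⟩ :=
    exists_isUniquelyColouredPair_Icc_union_Icc (by omega) hij (by omega) hkl hcard hL
  exact IsUniquelyColouredPair.exists_subset_card_eq_two <|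
    hxy.finOfNat fun u hu v hv => pairColour_lt (hL u hu) (hL v hv)
end

section
/- For n ≥ 2, let H' be the hypergraph with vertex set {1, …, n} whose hyperedges are all unions I ∪ J of two discrete intervals I, J ⊆ {1, …, n} with |I ∪ J| ≥ 3. Then every CF-colouring of H' uses at least √(n−1) colours; equivalently, χ_CF(H')² ≥ n − 1. -/
/-- The hyperedges of `H'`: all unions of two discrete intervals inside `{1,…,n}`
having at least 3 elements. -/
def unionIntervalEdges3 (n : ℕ) : Set (Finset ℕ) :=
  {e | 3 ≤ e.card ∧ ∃ i j k l : ℕ, 1 ≤ i ∧ i ≤ j ∧ j ≤ n ∧ 1 ≤ k ∧ k ≤ l ∧ l ≤ n ∧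
    e = Finset.Icc i j ∪ Finset.Icc k l}

/-!
If `1 ≤ a < b ≤ n - 1` and the colour pairs `(φ a, φ (a+1))`, `(φ b, φ (b+1))` agree, then in the
hyperedge `{a, a+1} ∪ {b, b+1}` of `H'` every colour occurs at least twice, so no vertex has a
unique colour. Hence `t ↦ (φ t, φ (t+1))` is injective on `{1, …, n-1}`, giving `n - 1 ≤ k²`.
-/

open Finset

theorem IsCFColouring.not_forall_colour_repeated {α β : Type*} {E : Set (Finset α)}
    {φ : α → β} (hφ : IsCFColouring E φ) {e : Finset α} (he : e ∈ E) (hne : e.Nonempty) :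
    ¬ ∀ x ∈ e, ∃ y ∈ e, y ≠ x ∧ φ y = φ x := by
  intro hrep
  obtain ⟨x, hx, hunique⟩ := hφ e he hne
  obtain ⟨y, hy, hyx, hcol⟩ := hrep x hx
  exact hunique y hy hyx hcol

theorem Icc_union_Icc_succ_mem_unionIntervalEdges3 {n a b : ℕ} (ha : 1 ≤ a) (hab : a < b)
    (hb : b < n) : Icc a (a + 1) ∪ Icc b (b + 1) ∈ unionIntervalEdges3 n := by
  refine ⟨?_, a, a + 1, b, b + 1, ha, by omega, by omega, by omega, by omega, hb, rfl⟩
  calc 3 = ({a, a + 1, b + 1} : Finset ℕ).card := by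
        rw [card_insert_of_notMem (by simp; omega), card_insert_of_notMem (by simp; omega),
          card_singleton]
    _ ≤ (Icc a (a + 1) ∪ Icc b (b + 1)).card := by
        apply card_le_card
        intro x hx
        simp only [mem_insert, mem_singleton] at hx
        simp only [mem_union, mem_Icc]
        omega

theorem IsCFColouring.adjacent_colours_ne {n a b : ℕ} {β : Type*} {φ : ℕ → β}
    (hφ : IsCFColouring (unionIntervalEdges3 n) φ) (ha : 1 ≤ a) (hab : a < b) (hb : b < n) :
    (φ a, φ (a + 1)) ≠ (φ b, φ (b + 1)) := by
  intro hpair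
  obtain ⟨h₀, h₁⟩ := Prod.ext_iff.mp hpair
  refine hφ.not_forall_colour_repeated (Icc_union_Icc_succ_mem_unionIntervalEdges3 ha hab hb)
    ⟨a, by simp⟩ ?_
  intro x hx
  simp only [mem_union, mem_Icc] at hx
  have hmem : ∀ y, y = a ∨ y = a + 1 ∨ y = b ∨ y = b + 1 →
      y ∈ Icc a (a + 1) ∪ Icc b (b + 1) := by
    intro y hy
    simp only [mem_union, mem_Icc]
    omega
  obtain rfl | rfl | rfl | rfl : x = a ∨ x = a + 1 ∨ x = b ∨ x = b + 1 := by omega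
  · exact ⟨b, hmem b (by omega), by omega, h₀.symm⟩
  · exact ⟨b + 1, hmem _ (by omega), by omega, h₁.symm⟩
  · exact ⟨a, hmem a (by omega), by omega, h₀⟩
  · exact ⟨a + 1, hmem _ (by omega), by omega, h₁⟩

theorem IsCFColouring.injOn_adjacent_colours {n : ℕ} {β : Type*} {φ : ℕ → β}
    (hφ : IsCFColouring (unionIntervalEdges3 n) φ) :
    Set.InjOn (fun t => (φ t, φ (t + 1))) (Icc 1 (n - 1)) := by
  intro a ha b hb hab
  simp only [coe_Icc, Set.mem_Icc] at ha hb
  rcases lt_trichotomy a b with hlt | heq | hlt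
  · exact absurd hab (hφ.adjacent_colours_ne ha.1 hlt (by omega))
  · exact heq
  · exact absurd hab.symm (hφ.adjacent_colours_ne hb.1 hlt (by omega))

theorem stmt_16_general (n : ℕ) (k : ℕ) (φ : ℕ → Fin k)
    (hφ : IsCFColouring (unionIntervalEdges3 n) φ) :
    n - 1 ≤ k * k := by
  have h := card_le_card_of_injOn _ (fun _ _ => mem_univ _) hφ.injOn_adjacent_colours
  simpa using h

theorem stmt_16 (n : ℕ) (hn : 2 ≤ n) (k : ℕ) (φ : ℕ → Fin k)
    (hφ : IsCFColouring (unionIntervalEdges3 n) φ) :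
    n - 1 ≤ k * k :=
  stmt_16_general n k φ hφ
end
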